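/- Let N ≥ 1 and α ∈ ℝ, and let J be the (N+1)×(N+1) real symmetric matrix, indexed by m ∈ {0,…,N}, with diagonal entries J_{mm} = α(m − N/2) and off-diagonal entries J_{m,m+1} = J_{m+1,m} = −√((m+1)(N−m)). Then the eigenvalues of J are exactly the numbers (k − N/2)·√(4 + α²) for k = 0, 1, …, N; in particular, the difference between the two smallest eigenvalues of J equals √(4 + α²), which is minimized at α = 0 with value 2. -/
import Mathlib


/-- `μ` is an eigenvalue of the real matrix `A`. -/
def IsEigen {n : ℕ} (A : Matrix (Fin n) (Fin n) ℝ) (μ : ℝ) : Prop :=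
  ∃ v : Fin n → ℝ, v ≠ 0 ∧ A.mulVec v = μ • v

/-- `l1 < l2` are the two smallest eigenvalues of `A`. -/
def TwoSmallest {n : ℕ} (A : Matrix (Fin n) (Fin n) ℝ) (l1 l2 : ℝ) : Prop :=
  IsEigen A l1 ∧ IsEigen A l2 ∧ l1 < l2 ∧
    ∀ μ, IsEigen A μ → l1 ≤ μ ∧ (μ ≠ l1 → l2 ≤ μ)

/-- The `(N+1) × (N+1)` Jacobi matrix with diagonal `α(m - N/2)` and off-diagonal
entries `-√((m+1)(N-m))` (the Hamming-symmetric restriction of the hypercube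
Schrödinger operator with linear potential, minus `N · 1`). -/
noncomputable def hypLinJ (N : ℕ) (α : ℝ) : Matrix (Fin (N + 1)) (Fin (N + 1)) ℝ :=
  Matrix.of fun i j =>
    if i = j then α * ((i : ℕ) - (N : ℝ) / 2)
    else if (i : ℕ) + 1 = (j : ℕ) then
      -Real.sqrt (((i : ℕ) + 1) * ((N : ℝ) - (i : ℕ)))
    else if (j : ℕ) + 1 = (i : ℕ) then
      -Real.sqrt (((j : ℕ) + 1) * ((N : ℝ) - (j : ℕ)))
    else 0

open Polynomial

noncomputable def hlR (α : ℝ) : ℝ := (-α + Real.sqrt (4 + α^2))/2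
noncomputable def hlRb (α : ℝ) : ℝ := (-α - Real.sqrt (4 + α^2))/2

noncomputable def hlP (N k : ℕ) (α : ℝ) : ℝ[X] :=
  (X - C (hlR α)) ^ k * (X - C (hlRb α)) ^ (N - k)

lemma hl_s_sq (α : ℝ) : Real.sqrt (4 + α^2) ^ 2 = 4 + α^2 :=
  Real.sq_sqrt (by positivity)

lemma hl_s_pos (α : ℝ) : 0 < Real.sqrt (4 + α^2) := Real.sqrt_pos.2 (by positivity)

lemma hl_sum (α : ℝ) : hlR α + hlRb α = -α := by unfold hlR hlRb; ring

lemma hl_prod (α : ℝ) : hlR α * hlRb α = -1 := by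
  have := hl_s_sq α
  unfold hlR hlRb
  nlinarith [this]

lemma hl_fac (α : ℝ) : (X^2 + C α * X - 1 : ℝ[X]) = (X - C (hlR α)) * (X - C (hlRb α)) := by
  have h1 := hl_sum α
  have h2 := hl_prod α
  have : (X - C (hlR α)) * (X - C (hlRb α)) =
      X^2 - C (hlR α + hlRb α) * X + C (hlR α * hlRb α) := by
    simp only [C_add, C_mul]; ring
  rw [this, h1, h2]
  simp only [map_neg, C_1]
  ring

lemma hl_pull (c : ℝ) (k : ℕ) :
    (X - C c) * derivative ((X - C c) ^ k : ℝ[X]) = C (k : ℝ) * (X - C c) ^ k := by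
  rw [derivative_pow]
  simp only [derivative_sub, derivative_X, derivative_C, sub_zero, mul_one]
  cases k with
  | zero => simp
  | succ n =>
    rw [Nat.add_sub_cancel]
    have : ((X : ℝ[X]) - C c) * (C ((n+1 : ℕ) : ℝ) * (X - C c) ^ n) =
        C ((n+1 : ℕ) : ℝ) * ((X - C c) * (X - C c) ^ n) := by ring
    rw [this, ← pow_succ']

lemma hl_scal (N k : ℕ) (α : ℝ) : (k : ℝ) * (-(hlRb α)) + ((N:ℝ)-k) * (-(hlR α)) =
    ((k:ℝ) - (N:ℝ)/2) * Real.sqrt (4 + α^2) + (N:ℝ)*α/2 := by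
  unfold hlR hlRb; ring

lemma hlP_identity (N k : ℕ) (hk : k ≤ N) (α : ℝ) :
    (X^2 + C α * X - 1) * derivative (hlP N k α) =
    C (((k:ℝ) - (N:ℝ)/2) * Real.sqrt (4 + α^2) + (N:ℝ)*α/2) * hlP N k α
      + C (N:ℝ) * X * hlP N k α := by
  have hA : (X - C (hlR α)) * derivative ((X - C (hlR α)) ^ k) = C (k : ℝ) * (X - C (hlR α)) ^ k :=
    hl_pull (hlR α) k
  have hB : (X - C (hlRb α)) * derivative ((X - C (hlRb α)) ^ (N-k))
      = C ((N - k : ℕ) : ℝ) * (X - C (hlRb α)) ^ (N-k) := hl_pull (hlRb α) (N-k)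
  have hcast : ((N - k : ℕ) : ℝ) = (N : ℝ) - (k : ℝ) := by rw [Nat.cast_sub hk]
  rw [hcast] at hB
  have hder : derivative (hlP N k α)
      = derivative ((X - C (hlR α)) ^ k) * (X - C (hlRb α)) ^ (N-k)
        + (X - C (hlR α)) ^ k * derivative ((X - C (hlRb α)) ^ (N-k)) := by
    unfold hlP; rw [derivative_mul]
  have hsc : C (((k:ℝ) - (N:ℝ)/2) * Real.sqrt (4 + α^2) + (N:ℝ)*α/2)
      = C ((k : ℝ) * (-(hlRb α)) + ((N:ℝ)-k) * (-(hlR α))) := (congrArg C (hl_scal N k α)).symm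
  rw [hl_fac α, hder, hsc]
  unfold hlP
  simp only [C_add, C_mul, C_neg, C_sub] at hB ⊢
  linear_combination ((X : ℝ[X]) - C (hlRb α)) * ((X - C (hlRb α)) ^ (N-k)) * hA
    + ((X : ℝ[X]) - C (hlR α)) * ((X - C (hlR α)) ^ k) * hB

lemma hl_coeff_X_mul_der (p : ℝ[X]) (m : ℕ) :
    (X * derivative p).coeff m = (m : ℝ) * p.coeff m := by
  cases m with
  | zero => simp [mul_coeff_zero]
  | succ t => rw [coeff_X_mul, coeff_derivative]; push_cast; ring

lemma hlP_monic (N k : ℕ) (α : ℝ) : (hlP N k α).Monic :=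
  ((monic_X_sub_C _).pow k).mul ((monic_X_sub_C _).pow (N - k))

lemma hlP_natDegree (N k : ℕ) (hk : k ≤ N) (α : ℝ) : (hlP N k α).natDegree = N := by
  unfold hlP
  rw [((monic_X_sub_C _).pow k).natDegree_mul ((monic_X_sub_C _).pow (N-k)),
    natDegree_pow, natDegree_pow, natDegree_X_sub_C, natDegree_X_sub_C]
  omega

lemma hlP_coeff_top (N k : ℕ) (hk : k ≤ N) (α : ℝ) : (hlP N k α).coeff N = 1 := by
  have := (hlP_monic N k α).coeff_natDegree
  rwa [hlP_natDegree N k hk α] at this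

lemma hlP_coeff_zero_of_gt (N k : ℕ) (hk : k ≤ N) (α : ℝ) {j : ℕ} (hj : N < j) :
    (hlP N k α).coeff j = 0 := by
  apply coeff_eq_zero_of_natDegree_lt
  rwa [hlP_natDegree N k hk α]

lemma hl_rec0 (N k : ℕ) (hk : k ≤ N) (α : ℝ) :
    α * (0 - (N:ℝ)/2) * (hlP N k α).coeff 0 - (hlP N k α).coeff 1
    = (((k:ℝ) - (N:ℝ)/2) * Real.sqrt (4 + α^2)) * (hlP N k α).coeff 0 := by
  have h := congrArg (fun q : ℝ[X] => q.coeff 0) (hlP_identity N k hk α)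
  have hL : ((X^2 + C α * X - 1) * derivative (hlP N k α))
      = X*(X*derivative (hlP N k α)) + C α * (X * derivative (hlP N k α))
        - derivative (hlP N k α) := by ring
  rw [hL] at h
  simp only [coeff_sub, coeff_add, coeff_C_mul, mul_coeff_zero, coeff_X_zero,
    coeff_C_zero, coeff_derivative, zero_mul, mul_zero, zero_add, add_zero] at h
  push_cast at h
  linarith [h]

lemma hl_recS (N k : ℕ) (hk : k ≤ N) (α : ℝ) (m : ℕ) :
    α * (((m:ℝ)+1) - (N:ℝ)/2) * (hlP N k α).coeff (m+1)
      - ((m:ℝ)+2) * (hlP N k α).coeff (m+2)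
      - ((N:ℝ) - m) * (hlP N k α).coeff m
    = (((k:ℝ) - (N:ℝ)/2) * Real.sqrt (4 + α^2)) * (hlP N k α).coeff (m+1) := by
  have h := congrArg (fun q : ℝ[X] => q.coeff (m+1)) (hlP_identity N k hk α)
  have hL : ((X^2 + C α * X - 1) * derivative (hlP N k α))
      = X*(X*derivative (hlP N k α)) + C α * (X * derivative (hlP N k α))
        - derivative (hlP N k α) := by ring
  rw [hL] at h
  rw [coeff_sub, coeff_add, coeff_C_mul, coeff_X_mul, hl_coeff_X_mul_der,
    hl_coeff_X_mul_der, coeff_derivative] at h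
  rw [coeff_add, coeff_C_mul, mul_assoc, coeff_C_mul, coeff_X_mul] at h
  push_cast at h
  linarith [h]

noncomputable def hlW (N k : ℕ) (α : ℝ) (j : ℕ) : ℝ :=
  (hlP N k α).coeff j * Real.sqrt ((j.factorial * (N - j).factorial : ℕ))

noncomputable def hlF (N : ℕ) (α : ℝ) (m j : ℕ) : ℝ :=
  if m = j then α * ((m : ℝ) - (N : ℝ) / 2)
  else if m + 1 = j then -Real.sqrt (((m : ℝ) + 1) * ((N : ℝ) - (m : ℝ)))
  else if j + 1 = m then -Real.sqrt (((j : ℝ) + 1) * ((N : ℝ) - (j : ℝ)))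
  else 0

lemma hlW_zero_of_gt (N k : ℕ) (hk : k ≤ N) (α : ℝ) {j : ℕ} (hj : N < j) :
    hlW N k α j = 0 := by
  unfold hlW
  rw [hlP_coeff_zero_of_gt N k hk α hj, zero_mul]

lemma hl_sqrt_helper (u v w z : ℕ) (h : u * v = w^2 * z) :
    Real.sqrt (u : ℝ) * Real.sqrt (v : ℝ) = (w : ℝ) * Real.sqrt (z : ℝ) := by
  rw [← Real.sqrt_mul (Nat.cast_nonneg u), ← Nat.cast_mul, h]
  push_cast
  rw [Real.sqrt_mul (by positivity), Real.sqrt_sq (Nat.cast_nonneg w)]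

lemma hl_nat1 (N t : ℕ) (ht : t + 1 ≤ N) :
    ((t+1) * (N-t)) * (t.factorial * (N-t).factorial)
      = (N-t)^2 * ((t+1).factorial * (N-(t+1)).factorial) := by
  have h1 : N - t = (N - (t+1)) + 1 := by omega
  rw [h1, Nat.factorial_succ, Nat.factorial_succ]
  ring

lemma hl_nat2 (N m : ℕ) (hm : m < N) :
    ((m+1) * (N-m)) * ((m+1).factorial * (N-(m+1)).factorial)
      = (m+1)^2 * (m.factorial * (N-m).factorial) := by
  have h1 : N - m = (N - (m+1)) + 1 := by omega
  rw [h1, Nat.factorial_succ, Nat.factorial_succ]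
  ring

lemma hl_claim1 (N t : ℕ) (ht : t + 1 ≤ N) :
    Real.sqrt (((t:ℝ)+1) * ((N:ℝ) - (t:ℝ))) * Real.sqrt ((t.factorial * (N-t).factorial : ℕ)) =
    ((N:ℝ) - (t:ℝ)) * Real.sqrt (((t+1).factorial * (N-(t+1)).factorial : ℕ)) := by
  have hc : ((t:ℝ)+1) * ((N:ℝ) - (t:ℝ)) = (((t+1) * (N-t) : ℕ) : ℝ) := by
    push_cast [Nat.cast_sub (by omega : t ≤ N)]; ring
  have hw : ((N:ℝ) - (t:ℝ)) = ((N - t : ℕ) : ℝ) := by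
    rw [Nat.cast_sub (by omega : t ≤ N)]
  rw [hc, hw, hl_sqrt_helper _ _ (N-t) _ (hl_nat1 N t ht)]

lemma hl_claim2 (N m : ℕ) (hm : m < N) :
    Real.sqrt (((m:ℝ)+1) * ((N:ℝ) - (m:ℝ)))
      * Real.sqrt (((m+1).factorial * (N-(m+1)).factorial : ℕ)) =
    ((m:ℝ)+1) * Real.sqrt ((m.factorial * (N-m).factorial : ℕ)) := by
  have hc : ((m:ℝ)+1) * ((N:ℝ) - (m:ℝ)) = (((m+1) * (N-m) : ℕ) : ℝ) := by
    push_cast [Nat.cast_sub hm.le]; ring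
  rw [hc, hl_sqrt_helper _ _ (m+1) _ (hl_nat2 N m hm)]
  push_cast
  ring

lemma hl_up (N k m : ℕ) (hk : k ≤ N) (hm : m ≤ N) (α : ℝ) :
    Real.sqrt (((m:ℝ)+1) * ((N:ℝ) - (m:ℝ))) * hlW N k α (m+1)
    = ((m:ℝ)+1) * ((hlP N k α).coeff (m+1)
        * Real.sqrt ((m.factorial * (N-m).factorial : ℕ))) := by
  rcases eq_or_lt_of_le hm with h | h
  · rw [hlW_zero_of_gt N k hk α (by omega), hlP_coeff_zero_of_gt N k hk α (by omega)]
    ring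
  · unfold hlW
    rw [show Real.sqrt (((m:ℝ)+1) * ((N:ℝ) - (m:ℝ))) * ((hlP N k α).coeff (m+1)
        * Real.sqrt (((m+1).factorial * (N-(m+1)).factorial : ℕ)))
      = (hlP N k α).coeff (m+1) * (Real.sqrt (((m:ℝ)+1) * ((N:ℝ) - (m:ℝ)))
        * Real.sqrt (((m+1).factorial * (N-(m+1)).factorial : ℕ))) from by ring,
      hl_claim2 N m h]
    ring

lemma hl_sum_eq (N k : ℕ) (hN : 1 ≤ N) (hk : k ≤ N) (α : ℝ) (m : ℕ) (hm : m ≤ N) :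
    ∑ j ∈ Finset.range (N+2), hlF N α m j * hlW N k α j
      = (((k:ℝ) - (N:ℝ)/2) * Real.sqrt (4 + α^2)) * hlW N k α m := by
  cases m with
  | zero =>
    have hsub : ({0, 1} : Finset ℕ) ⊆ Finset.range (N+2) := by
      intro x hx
      simp only [Finset.mem_insert, Finset.mem_singleton] at hx
      rcases hx with h | h <;> simp [h] <;> omega
    have hzero : ∀ j ∈ Finset.range (N+2), j ∉ ({0, 1} : Finset ℕ) →
        hlF N α 0 j * hlW N k α j = 0 := by
      intro j _ hj
      simp only [Finset.mem_insert, Finset.mem_singleton, not_or] at hj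
      unfold hlF
      rw [if_neg (by omega), if_neg (by omega), if_neg (by omega), zero_mul]
    rw [← Finset.sum_subset hsub hzero]
    rw [show ({0, 1} : Finset ℕ) = insert 0 {1} from rfl,
      Finset.sum_insert (by simp), Finset.sum_singleton]
    have hf0 : hlF N α 0 0 = α * ((0:ℝ) - (N:ℝ)/2) := by
      unfold hlF; rw [if_pos rfl]; norm_num
    have hf1 : hlF N α 0 1 = -Real.sqrt (((0:ℝ)+1) * ((N:ℝ) - (0:ℝ))) := by
      unfold hlF; rw [if_neg (by omega), if_pos rfl]; norm_num
    rw [hf0, hf1]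
    have hup := hl_up N k 0 hk (by omega) α
    have hrec := hl_rec0 N k hk α
    unfold hlW at hup ⊢
    push_cast at hup hrec ⊢
    linear_combination Real.sqrt ((Nat.factorial 0 : ℝ) * ((N - 0).factorial : ℝ)) * hrec - hup
  | succ t =>
    have ht : t + 1 ≤ N := hm
    have hsub : ({t, t+1, t+2} : Finset ℕ) ⊆ Finset.range (N+2) := by
      intro x hx
      simp only [Finset.mem_insert, Finset.mem_singleton] at hx
      simp only [Finset.mem_range]
      omega
    have hzero : ∀ j ∈ Finset.range (N+2), j ∉ ({t, t+1, t+2} : Finset ℕ) →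
        hlF N α (t+1) j * hlW N k α j = 0 := by
      intro j _ hj
      simp only [Finset.mem_insert, Finset.mem_singleton, not_or] at hj
      unfold hlF
      rw [if_neg (by omega), if_neg (by omega), if_neg (by omega), zero_mul]
    rw [← Finset.sum_subset hsub hzero]
    rw [show ({t, t+1, t+2} : Finset ℕ) = insert t (insert (t+1) {t+2}) from rfl,
      Finset.sum_insert (by simp only [Finset.mem_insert, Finset.mem_singleton]; omega),
      Finset.sum_insert (by simp only [Finset.mem_singleton]; omega),
      Finset.sum_singleton]
    have hfL : hlF N α (t+1) t = -Real.sqrt (((t:ℝ)+1) * ((N:ℝ) - (t:ℝ))) := by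
      unfold hlF; rw [if_neg (by omega), if_neg (by omega), if_pos rfl]
    have hfD : hlF N α (t+1) (t+1) = α * (((t+1:ℕ):ℝ) - (N:ℝ)/2) := by
      unfold hlF; rw [if_pos rfl]
    have hfU : hlF N α (t+1) (t+2) = -Real.sqrt ((((t+1:ℕ):ℝ)+1) * ((N:ℝ) - ((t+1:ℕ):ℝ))) := by
      unfold hlF; rw [if_neg (by omega), if_pos rfl]
    rw [hfL, hfD, hfU]
    have hc1 := hl_claim1 N t ht
    have hup := hl_up N k (t+1) hk ht α
    have hrec := hl_recS N k hk α t
    unfold hlW at hc1 hup ⊢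
    push_cast at hc1 hup hrec ⊢
    rw [show t+1+1 = t+2 from rfl] at hup
    linear_combination (-(hlP N k α).coeff t) * hc1 - hup
      + Real.sqrt (((t+1).factorial : ℝ) * ((N-(t+1)).factorial : ℝ)) * hrec

lemma hl_eigen (N k : ℕ) (hN : 1 ≤ N) (hk : k ≤ N) (α : ℝ) :
    (hypLinJ N α).mulVec (fun i : Fin (N+1) => hlW N k α i) =
      (((k:ℝ) - (N:ℝ)/2) * Real.sqrt (4 + α^2)) • (fun i : Fin (N+1) => hlW N k α i) := by
  funext i
  have hstep : ∀ j : Fin (N+1),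
      hypLinJ N α i j * hlW N k α j = hlF N α (i:ℕ) (j:ℕ) * hlW N k α (j:ℕ) := by
    intro j
    unfold hypLinJ hlF
    simp only [Matrix.of_apply, Fin.ext_iff]
  have hmv : (hypLinJ N α).mulVec (fun i : Fin (N+1) => hlW N k α i) i
      = ∑ j : Fin (N+1), hypLinJ N α i j * hlW N k α j := rfl
  rw [hmv, Finset.sum_congr rfl (fun j _ => hstep j),
    Fin.sum_univ_eq_sum_range (fun j => hlF N α (i:ℕ) j * hlW N k α j) (N+1)]
  have hext : ∑ j ∈ Finset.range (N+2), hlF N α (i:ℕ) j * hlW N k α j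
      = ∑ j ∈ Finset.range (N+1), hlF N α (i:ℕ) j * hlW N k α j := by
    rw [Finset.sum_range_succ, hlW_zero_of_gt N k hk α (by omega), mul_zero, add_zero]
  rw [← hext, hl_sum_eq N k hN hk α (i:ℕ) (by omega : (i:ℕ) ≤ N)]
  simp [Pi.smul_apply, smul_eq_mul]

lemma hlW_top_ne (N k : ℕ) (hk : k ≤ N) (α : ℝ) : hlW N k α N ≠ 0 := by
  unfold hlW
  rw [hlP_coeff_top N k hk α, one_mul]
  refine ne_of_gt (Real.sqrt_pos.2 ?_)
  have : 0 < N.factorial * (N - N).factorial := by positivity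
  exact_mod_cast this

lemma hl_symm (N : ℕ) (α : ℝ) (i j : Fin (N+1)) : hypLinJ N α j i = hypLinJ N α i j := by
  unfold hypLinJ
  simp only [Matrix.of_apply]
  by_cases h1 : i = j
  · subst h1; rfl
  · rw [if_neg h1, if_neg (Ne.symm h1)]
    by_cases h2 : (i:ℕ) + 1 = (j:ℕ)
    · rw [if_pos h2, if_neg (by omega), if_pos h2]
    · by_cases h3 : (j:ℕ) + 1 = (i:ℕ)
      · rw [if_pos h3, if_neg h2, if_pos h3]
      · rw [if_neg h3, if_neg h2, if_neg h2, if_neg h3]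

open Matrix in
lemma hl_orth {n : ℕ} (A : Matrix (Fin n) (Fin n) ℝ) (hA : ∀ i j, A j i = A i j)
    {u v : Fin n → ℝ} {μ ν : ℝ} (hu : A.mulVec u = μ • u) (hv : A.mulVec v = ν • v)
    (hne : μ ≠ ν) : u ⬝ᵥ v = 0 := by
  have hAT : Aᵀ = A := Matrix.ext fun i j => hA i j
  have h1 : u ⬝ᵥ A.mulVec v = ν * (u ⬝ᵥ v) := by
    rw [hv, dotProduct_smul, smul_eq_mul]
  have h2 : u ⬝ᵥ A.mulVec v = μ * (u ⬝ᵥ v) := by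
    rw [dotProduct_mulVec, ← mulVec_transpose, hAT, hu, smul_dotProduct, smul_eq_mul]
  have h3 : (ν - μ) * (u ⬝ᵥ v) = 0 := by rw [sub_mul, ← h1, ← h2, sub_self]
  rcases mul_eq_zero.1 h3 with h | h
  · exact absurd (by linarith [sub_eq_zero.1 h]) hne
  · exact h

open Matrix in
lemma hl_li {n m : ℕ} (g : Fin m → (Fin n → ℝ)) (hnz : ∀ i, g i ≠ 0)
    (horth : ∀ i j, i ≠ j → g i ⬝ᵥ g j = 0) : LinearIndependent ℝ g := by
  rw [Fintype.linearIndependent_iff]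
  intro c hc i
  have hL : (g i) ⬝ᵥ (∑ j, c j • g j) = ∑ j, c j * ((g i) ⬝ᵥ (g j)) := by
    simp only [dotProduct, Finset.sum_apply, Pi.smul_apply, smul_eq_mul,
      Finset.mul_sum]
    rw [Finset.sum_comm]
    refine Finset.sum_congr rfl fun j _ => Finset.sum_congr rfl fun x _ => by ring
  rw [hc] at hL
  rw [dotProduct_zero] at hL
  have hsingle : ∑ j, c j * ((g i) ⬝ᵥ (g j)) = c i * ((g i) ⬝ᵥ (g i)) := by
    refine Finset.sum_eq_single i (fun j _ hj => ?_) (by simp)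
    rw [horth i j (Ne.symm hj), mul_zero]
  rw [hsingle] at hL
  have hself : (g i) ⬝ᵥ (g i) ≠ 0 := fun h => hnz i (dotProduct_self_eq_zero.1 h)
  rcases mul_eq_zero.1 hL.symm with h | h
  · exact h
  · exact absurd h hself

lemma hl_card_le {n m : ℕ} (g : Fin m → (Fin n → ℝ)) (h : LinearIndependent ℝ g) : m ≤ n := by
  have := h.fintype_card_le_finrank
  simpa [Module.finrank_fintype_fun_eq_card] using this

/-- the eigenvalues of `hypLinJ N α` are exactly the numbers
`(k - N/2)·√(4 + α²)` for `k = 0, …, N`; in particular the difference of the two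
smallest eigenvalues is `√(4 + α²)`, which is `≥ 2` with equality at `α = 0`. -/
theorem hypercube_linear_spectrum (N : ℕ) (hN : 1 ≤ N) (α : ℝ) :
    (∀ μ : ℝ, IsEigen (hypLinJ N α) μ ↔
      ∃ k : ℕ, k ≤ N ∧ μ = ((k : ℝ) - (N : ℝ) / 2) * Real.sqrt (4 + α ^ 2)) ∧
    (∀ l1 l2 : ℝ, TwoSmallest (hypLinJ N α) l1 l2 →
      l2 - l1 = Real.sqrt (4 + α ^ 2)) ∧
    2 ≤ Real.sqrt (4 + α ^ 2) ∧
    (α = 0 → Real.sqrt (4 + α ^ 2) = 2) := by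
  classical
  have hs : 0 < Real.sqrt (4 + α ^ 2) := hl_s_pos α
  have hmem : ∀ k : ℕ, k ≤ N →
      IsEigen (hypLinJ N α) (((k:ℝ) - (N:ℝ)/2) * Real.sqrt (4 + α ^ 2)) := by
    intro k hk
    refine ⟨fun i : Fin (N+1) => hlW N k α i, ?_, hl_eigen N k hN hk α⟩
    intro h0
    have h1 := congrFun h0 ⟨N, by omega⟩
    simp only [Pi.zero_apply] at h1
    exact hlW_top_ne N k hk α h1
  have hiff : ∀ μ, IsEigen (hypLinJ N α) μ →
      ∃ k : ℕ, k ≤ N ∧ μ = ((k:ℝ) - (N:ℝ)/2) * Real.sqrt (4 + α ^ 2) := by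
    intro μ hμ
    by_contra hcon
    push_neg at hcon
    obtain ⟨v, hv0, hveq⟩ := hμ
    set G : Fin (N+2) → (Fin (N+1) → ℝ) :=
      fun j => if (j:ℕ) ≤ N then (fun i => hlW N (j:ℕ) α i) else v with hG
    set ev : Fin (N+2) → ℝ :=
      fun j => if (j:ℕ) ≤ N then (((j:ℕ):ℝ) - (N:ℝ)/2) * Real.sqrt (4 + α ^ 2) else μ with hev
    have hGe : ∀ j, (hypLinJ N α).mulVec (G j) = ev j • G j := by
      intro j
      by_cases h : (j:ℕ) ≤ N
      · simp only [hG, hev, if_pos h]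
        exact hl_eigen N (j:ℕ) hN h α
      · simp only [hG, hev, if_neg h]
        exact hveq
    have hGn : ∀ j, G j ≠ 0 := by
      intro j
      by_cases h : (j:ℕ) ≤ N
      · simp only [hG, if_pos h]
        intro h0
        have h1 := congrFun h0 ⟨N, by omega⟩
        simp only [Pi.zero_apply] at h1
        exact hlW_top_ne N (j:ℕ) h α h1
      · simp only [hG, if_neg h]; exact hv0
    have hevinj : ∀ j1 j2 : Fin (N+2), j1 ≠ j2 → ev j1 ≠ ev j2 := by
      intro j1 j2 hne
      simp only [hev]
      by_cases h1 : (j1:ℕ) ≤ N <;> by_cases h2 : (j2:ℕ) ≤ N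
      · rw [if_pos h1, if_pos h2]
        intro he
        have hc : ((j1:ℕ):ℝ) = ((j2:ℕ):ℝ) := by
          have := mul_right_cancel₀ (ne_of_gt hs) he
          linarith
        exact hne (Fin.ext (by exact_mod_cast hc))
      · rw [if_pos h1, if_neg h2]
        exact fun he => hcon (j1:ℕ) h1 he.symm
      · rw [if_neg h1, if_pos h2]
        exact fun he => hcon (j2:ℕ) h2 he
      · exact absurd (Fin.ext (by omega)) hne
    have horth : ∀ j1 j2 : Fin (N+2), j1 ≠ j2 → dotProduct (G j1) (G j2) = 0 :=
      fun j1 j2 hne =>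
        hl_orth (hypLinJ N α) (hl_symm N α) (hGe j1) (hGe j2) (hevinj j1 j2 hne)
    have hcard := hl_card_le G (hl_li G hGn horth)
    omega
  have part1 : ∀ μ : ℝ, IsEigen (hypLinJ N α) μ ↔
      ∃ k : ℕ, k ≤ N ∧ μ = ((k:ℝ) - (N:ℝ)/2) * Real.sqrt (4 + α ^ 2) := by
    intro μ
    constructor
    · exact hiff μ
    · rintro ⟨k, hk, rfl⟩
      exact hmem k hk
  refine ⟨part1, ?_, ?_, ?_⟩
  · rintro l1 l2 ⟨he1, he2, hlt, hmin⟩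
    obtain ⟨k1, hk1, hl1⟩ := (part1 l1).1 he1
    obtain ⟨k2, hk2, hl2⟩ := (part1 l2).1 he2
    have h0mem := hmem 0 (by omega)
    have h1mem := hmem 1 hN
    have hth0 := (hmin _ h0mem).1
    have hl1ge : (((0:ℕ):ℝ) - (N:ℝ)/2) * Real.sqrt (4 + α ^ 2) ≤ l1 := by
      rw [hl1]
      have hc : (0:ℝ) ≤ (k1:ℝ) := Nat.cast_nonneg k1
      nlinarith
    have hl1e : l1 = (((0:ℕ):ℝ) - (N:ℝ)/2) * Real.sqrt (4 + α ^ 2) :=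
      le_antisymm hth0 hl1ge
    have hk2pos : 1 ≤ k2 := by
      by_contra hcc
      push_neg at hcc
      have hk20 : k2 = 0 := by omega
      rw [hk20] at hl2
      exact absurd (hl2.trans hl1e.symm) (ne_of_gt hlt)
    have h1ne : (((1:ℕ):ℝ) - (N:ℝ)/2) * Real.sqrt (4 + α ^ 2) ≠ l1 := by
      rw [hl1e]
      intro hcc
      have : Real.sqrt (4 + α ^ 2) = 0 := by push_cast at hcc; nlinarith
      linarith
    have hle2 := (hmin _ h1mem).2 h1ne
    have hge2 : (((1:ℕ):ℝ) - (N:ℝ)/2) * Real.sqrt (4 + α ^ 2) ≤ l2 := by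
      rw [hl2]
      have hc : (1:ℝ) ≤ (k2:ℝ) := by exact_mod_cast hk2pos
      nlinarith
    rw [le_antisymm hle2 hge2, hl1e]
    push_cast
    ring
  · have hs2 := hl_s_sq α
    nlinarith [Real.sqrt_nonneg (4 + α ^ 2), sq_nonneg α]
  · intro h
    subst h
    rw [show (4:ℝ) + 0 ^ 2 = 2 ^ 2 by norm_num, Real.sqrt_sq (by norm_num : (0:ℝ) ≤ 2)]
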